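/- If T is a finite tree on at least 2 vertices, then T^3 is Hamilton-connected. -/

import Mathlib

def SimpleGraph.power {V : Type*} (G : SimpleGraph V) (n : ℕ) : SimpleGraph V where
  Adj v w := 1 ≤ G.dist v w ∧ G.dist v w ≤ n
  symm := ⟨fun v w h => by
    obtain ⟨h1, h2⟩ := h
    exact ⟨by rwa [SimpleGraph.dist_comm], by rwa [SimpleGraph.dist_comm]⟩⟩
  loopless := ⟨fun v h => by simp [SimpleGraph.dist_self] at h⟩

/-- A graph is Hamilton-connected if every pair of distinct vertices is joined
by a Hamiltonian path. -/
def SimpleGraph.IsHamiltonConnected {V : Type*} [DecidableEq V] (G : SimpleGraph V) : Prop :=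
  ∀ v w : V, v ≠ w → ∃ p : G.Walk v w, p.IsHamiltonian

/-- A graph is `k`-ordered if every sequence of `k` distinct vertices lies on a cycle
in the given cyclic order. -/
def SimpleGraph.IsKOrdered {V : Type*} (G : SimpleGraph V) (k : ℕ) : Prop :=
  ∀ v : Fin k → V, Function.Injective v →
    ∃ (a : V) (c : G.Walk a a), c.IsCycle ∧
      ∃ t : Fin k → ℕ, StrictMono t ∧ (∀ i, t i < c.length) ∧ ∀ i, c.getVert (t i) = v i

/-- A graph is `k`-ordered Hamiltonian if every sequence of `k` distinct vertices lies on a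
Hamiltonian cycle in the given cyclic order. -/
def SimpleGraph.IsKOrderedHamiltonian {V : Type*} [DecidableEq V] (G : SimpleGraph V) (k : ℕ) :
    Prop :=
  ∀ v : Fin k → V, Function.Injective v →
    ∃ (a : V) (c : G.Walk a a), c.IsHamiltonianCycle ∧
      ∃ t : Fin k → ℕ, StrictMono t ∧ (∀ i, t i < c.length) ∧ ∀ i, c.getVert (t i) = v i

section AuxForStmt1

set_option linter.unusedSectionVars false
variable {V : Type*} [DecidableEq V]

namespace SimpleGraph

/-- In a tree, every path realizes the distance. -/
lemma aux_length_eq_dist {T : SimpleGraph V} (hT : T.IsTree) {a b : V}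
    {p : T.Walk a b} (hp : p.IsPath) : p.length = T.dist a b := by
  obtain ⟨q, hq⟩ := hT.isConnected.exists_walk_length_eq_dist a b
  have hb : q.bypass.IsPath := q.bypass_isPath
  have hpq : p = q.bypass := (hT.existsUnique_path a b).unique hp hb
  have h1 : T.dist a b ≤ p.length := T.dist_le p
  have h2 : q.bypass.length ≤ q.length := q.length_bypass_le
  rw [hpq] at h1 ⊢
  omega

/-- split along a vertex of a path in a tree -/
lemma aux_dist_split {T : SimpleGraph V} (hT : T.IsTree) {a b c : V}
    {p : T.Walk a b} (hp : p.IsPath) (hc : c ∈ p.support) :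
    T.dist a c + T.dist c b = T.dist a b := by
  have h1 := aux_length_eq_dist hT (hp.takeUntil hc)
  have h2 := aux_length_eq_dist hT (hp.dropUntil hc)
  have h3 := aux_length_eq_dist hT hp
  have h4 := congrArg Walk.length (p.take_spec hc)
  rw [Walk.length_append] at h4
  omega

/-- no ties in a tree across an edge -/
lemma aux_no_tie {T : SimpleGraph V} (hT : T.IsTree) {x y : V} (hxy : T.Adj x y)
    (w : V) : T.dist w x ≠ T.dist w y := by
  intro h
  obtain ⟨Q, hQp, hQl⟩ := (hT.isConnected w y).exists_path_of_dist
  by_cases hx : x ∈ Q.support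
  · have hs := aux_dist_split hT hQp hx
    have h1 : T.dist x y = 1 := dist_eq_one_iff_adj.2 hxy
    have hwx : 1 ≤ T.dist w x := by
      rcases Nat.eq_zero_or_pos (T.dist w x) with h0 | h0
      · have : w = x := ((hT.isConnected w x).dist_eq_zero_iff).1 h0
        subst this
        simp [SimpleGraph.dist_self] at h ⊢
        omega
      · omega
    omega
  · have hx' : x ∉ Q.reverse.support := by
      rwa [Walk.support_reverse, List.mem_reverse]
    have hP : (Walk.cons hxy Q.reverse).IsPath := hQp.reverse.cons hx'
    have := aux_length_eq_dist hT hP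
    rw [Walk.length_cons, Walk.length_reverse] at this
    rw [dist_comm (G:=T) (u:=x) (v:=w)] at this
    omega

def inducedHom (T : SimpleGraph V) (S : Set V) : T.induce S →g T :=
  ⟨Subtype.val, fun h => h⟩

lemma aux_dist_induce_le {T : SimpleGraph V} {S : Set V} {a b : ↥S}
    (h : (T.induce S).Reachable a b) :
    T.dist a.val b.val ≤ (T.induce S).dist a b := by
  obtain ⟨p, hp⟩ := h.exists_walk_length_eq_dist
  have := T.dist_le (p.map (inducedHom T S))
  rwa [Walk.length_map, hp] at this

lemma aux_acyclic_induce {T : SimpleGraph V} (hT : T.IsAcyclic) (S : Set V) :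
    (T.induce S).IsAcyclic := by
  intro v c hc
  exact hT (c.map (inducedHom T S))
    (hc.map (f := inducedHom T S) Subtype.val_injective)

lemma aux_reachable_induce {T : SimpleGraph V} {S : Set V} {a b : V}
    (p : T.Walk a b) (hs : ∀ c ∈ p.support, c ∈ S) (ha : a ∈ S) (hb : b ∈ S) :
    (T.induce S).Reachable ⟨a, ha⟩ ⟨b, hb⟩ := by
  induction p with
  | nil => rfl
  | @cons a c b h q ih =>
    have hc : c ∈ S := hs c (by simp)
    have hadj : (T.induce S).Adj ⟨a, ha⟩ ⟨c, hc⟩ := h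
    exact hadj.reachable.trans (ih (fun d hd => hs d (by simp [hd])) hc hb)

lemma aux_connected_induce_side {T : SimpleGraph V} (hT : T.IsTree) {x y : V}
    (hxy : T.Adj x y) : (T.induce {w | T.dist w x < T.dist w y}).Connected := by
  set S := {w | T.dist w x < T.dist w y} with hS
  have hx : x ∈ S := by
    simp only [hS, Set.mem_setOf_eq, SimpleGraph.dist_self]
    rw [dist_eq_one_iff_adj.2 hxy]
    omega
  have key : ∀ w (hw : w ∈ S), (T.induce S).Reachable ⟨w, hw⟩ ⟨x, hx⟩ := by
    intro w hw
    obtain ⟨p, hp, _⟩ := (hT.isConnected w x).exists_path_of_dist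
    refine aux_reachable_induce p (fun a haS => ?_) hw hx
    have hsplit := aux_dist_split hT hp haS
    by_contra hna
    have hne := aux_no_tie hT hxy a
    have h1 : T.dist a y < T.dist a x := by
      simp only [hS, Set.mem_setOf_eq, not_lt] at hna
      omega
    have h2 : T.dist w y ≤ T.dist w a + T.dist a y := hT.isConnected.dist_triangle
    have h3 : T.dist w x < T.dist w y := hw
    omega
  rw [connected_iff]
  refine ⟨fun a b => ?_, ⟨⟨x, hx⟩⟩⟩
  exact (key a.val a.property).trans (key b.val b.property).symm

lemma aux_power_adj {T : SimpleGraph V} (hc : T.Connected) {S : Set V} {a b : ↥S}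
    (h : ((T.induce S).power 3).Adj a b) : (T.power 3).Adj a.val b.val := by
  obtain ⟨h1, h2⟩ : 1 ≤ (T.induce S).dist a b ∧ (T.induce S).dist a b ≤ 3 := h
  have hne : a ≠ b := by
    intro he; rw [he, SimpleGraph.dist_self] at h1; omega
  have hreach : (T.induce S).Reachable a b := Reachable.of_dist_ne_zero (by omega)
  have hle : T.dist a.val b.val ≤ (T.induce S).dist a b := aux_dist_induce_le hreach
  have hvne : a.val ≠ b.val := fun he => hne (Subtype.ext he)
  exact ⟨hc.pos_dist_of_ne hvne, le_trans hle h2⟩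

def powerHom (T : SimpleGraph V) (hc : T.Connected) (S : Set V) :
    (T.induce S).power 3 →g T.power 3 :=
  ⟨Subtype.val, aux_power_adj hc⟩

lemma aux_ham_reverse {G : SimpleGraph V} {a b : V} {p : G.Walk a b}
    (h : p.IsHamiltonian) : p.reverse.IsHamiltonian := fun v => by
  rw [Walk.support_reverse, List.count_reverse]; exact h v

lemma aux_endpoint {V' : Type*} [Fintype V'] [DecidableEq V'] (T : SimpleGraph V')
    (hT : T.IsTree)
    (IH : ∀ a b : V', a ≠ b → ∃ p : (T.power 3).Walk a b, p.IsHamiltonian) (r : V') :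
    ∃ (z : V') (p : (T.power 3).Walk r z), T.dist r z ≤ 1 ∧ p.IsHamiltonian := by
  by_cases hall : ∀ w : V', w = r
  · refine ⟨r, .nil, by simp [SimpleGraph.dist_self], fun a => ?_⟩
    rw [hall a]; simp
  · push_neg at hall
    obtain ⟨w, hw⟩ := hall
    obtain ⟨p⟩ := hT.isConnected r w
    obtain ⟨z, hz⟩ : ∃ z, T.Adj r z := by
      cases p with
      | nil => exact absurd rfl hw
      | cons h _ => exact ⟨_, h⟩
    obtain ⟨q, hq⟩ := IH r z hz.ne
    exact ⟨z, q, le_of_eq (dist_eq_one_iff_adj.2 hz), hq⟩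

lemma aux_endpoint2 {V' : Type*} [Fintype V'] [DecidableEq V'] (T : SimpleGraph V')
    (hT : T.IsTree)
    (IH : ∀ a b : V', a ≠ b → ∃ p : (T.power 3).Walk a b, p.IsHamiltonian) (r s : V') :
    ∃ (w : V') (p : (T.power 3).Walk w s), T.dist w r ≤ 1 ∧ p.IsHamiltonian := by
  by_cases h : r = s
  · subst h
    obtain ⟨z, p, hd, hp⟩ := aux_endpoint T hT IH r
    exact ⟨z, p.reverse, by rwa [dist_comm], aux_ham_reverse hp⟩
  · obtain ⟨p, hp⟩ := IH r s h
    exact ⟨r, p, by simp [SimpleGraph.dist_self], hp⟩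

lemma aux_main : ∀ (n : ℕ) (V' : Type*) [Fintype V'] [DecidableEq V'] (T : SimpleGraph V'),
    Fintype.card V' ≤ n → T.IsTree → ∀ u v : V', u ≠ v →
    ∃ p : (T.power 3).Walk u v, p.IsHamiltonian := by
  intro n
  induction n with
  | zero =>
    intro V' _ _ T hcard _ u v _
    have : 0 < Fintype.card V' := Fintype.card_pos_iff.2 ⟨u⟩
    omega
  | succ n IHn =>
    intro V' _ _ T hcard hT u v huv
    classical
    obtain ⟨p, hp, hlen⟩ := (hT.isConnected u v).exists_path_of_dist
    have hduv : 0 < T.dist u v := hT.isConnected.pos_dist_of_ne huv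
    have hnil : ¬ p.Nil := by
      rw [Walk.nil_iff_length_eq]; omega
    set y := p.getVert 1 with hy
    have hadj : T.Adj u y := p.adj_snd hnil
    have hysupp : y ∈ p.support :=
      Walk.mem_support_iff_exists_getVert.2 ⟨1, rfl, by omega⟩
    have hsplit := aux_dist_split hT hp hysupp
    have hd1 : T.dist u y = 1 := dist_eq_one_iff_adj.2 hadj
    set S : Set V' := {w | T.dist w u < T.dist w y} with hSdef
    set S' : Set V' := {w | T.dist w y < T.dist w u} with hS'def
    have htot : ∀ w, w ∈ S ∨ w ∈ S' := fun w => by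
      have := aux_no_tie hT hadj w
      rcases lt_or_gt_of_ne this with h | h
      · exact Or.inl h
      · exact Or.inr h
    have hdisj : ∀ w, w ∈ S → w ∈ S' → False := fun w h1 h2 => by
      simp only [hSdef, hS'def, Set.mem_setOf_eq] at h1 h2; omega
    have huS : u ∈ S := by
      simp only [hSdef, Set.mem_setOf_eq, SimpleGraph.dist_self]; omega
    have hyS' : y ∈ S' := by
      simp only [hS'def, Set.mem_setOf_eq, SimpleGraph.dist_self]
      exact hT.isConnected.pos_dist_of_ne hadj.ne'
    have hvS' : v ∈ S' := by
      simp only [hS'def, Set.mem_setOf_eq]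
      rw [dist_comm (G:=T) (u:=v) (v:=y), dist_comm (G:=T) (u:=v) (v:=u)]
      omega
    have hT1 : (T.induce S).IsTree :=
      ⟨aux_connected_induce_side hT hadj, aux_acyclic_induce hT.2 S⟩
    have hT2 : (T.induce S').IsTree :=
      ⟨aux_connected_induce_side hT hadj.symm, aux_acyclic_induce hT.2 S'⟩
    have hcardS : Fintype.card ↥S ≤ n := by
      have := Fintype.card_subtype_lt (p := (· ∈ S)) (x := y) (fun h => hdisj y h hyS')
      have he : Fintype.card ↥S < Fintype.card V' := by convert this
      omega
    have hcardS' : Fintype.card ↥S' ≤ n := by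
      have := Fintype.card_subtype_lt (p := (· ∈ S')) (x := u) (fun h => hdisj u huS h)
      have he : Fintype.card ↥S' < Fintype.card V' := by convert this
      omega
    obtain ⟨z, q1, hdz, hq1⟩ :=
      aux_endpoint (T.induce S) hT1 (IHn ↥S (T.induce S) hcardS hT1) ⟨u, huS⟩
    obtain ⟨w, q2, hdw, hq2⟩ :=
      aux_endpoint2 (T.induce S') hT2 (IHn ↥S' (T.induce S') hcardS' hT2) ⟨y, hyS'⟩ ⟨v, hvS'⟩
    have hz1 : T.dist u z.val ≤ 1 :=
      le_trans (aux_dist_induce_le (hT1.isConnected ⟨u, huS⟩ z)) hdz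
    have hw1 : T.dist w.val y ≤ 1 :=
      le_trans (aux_dist_induce_le (hT2.isConnected w ⟨y, hyS'⟩)) hdw
    have hzw : (T.power 3).Adj z.val w.val := by
      have hne : z.val ≠ w.val := fun he => hdisj z.val z.property (he ▸ w.property)
      refine (show 1 ≤ T.dist z.val w.val ∧ T.dist z.val w.val ≤ 3 from
        ⟨hT.isConnected.pos_dist_of_ne hne, ?_⟩)
      have t1 : T.dist z.val w.val ≤ T.dist z.val u + T.dist u w.val :=
        hT.isConnected.dist_triangle
      have t2 : T.dist u w.val ≤ T.dist u y + T.dist y w.val :=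
        hT.isConnected.dist_triangle
      have e1 : T.dist z.val u = T.dist u z.val := dist_comm
      have e2 : T.dist y w.val = T.dist w.val y := dist_comm
      omega
    have hzw' : (T.power 3).Adj (powerHom T hT.isConnected S z)
        (powerHom T hT.isConnected S' w) := hzw
    refine ⟨((q1.map (powerHom T hT.isConnected S)).append
      (Walk.cons hzw' (q2.map (powerHom T hT.isConnected S'))) :
        (T.power 3).Walk (powerHom T hT.isConnected S ⟨u, huS⟩)
          (powerHom T hT.isConnected S' ⟨v, hvS'⟩)), fun m => ?_⟩
    have hsupp : ((q1.map (powerHom T hT.isConnected S)).append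
        (Walk.cons hzw' (q2.map (powerHom T hT.isConnected S')))).support
        = q1.support.map Subtype.val ++ q2.support.map Subtype.val := by
      rw [Walk.support_append, Walk.support_cons, List.tail_cons,
        Walk.support_map, Walk.support_map]
      rfl
    refine (congrArg (List.count m) hsupp).trans ?_
    rw [List.count_append]
    rcases htot m with hm | hm
    · have hc1 : (q1.support.map Subtype.val).count m = 1 := by
        have := List.count_map_of_injective q1.support Subtype.val
          Subtype.val_injective (⟨m, hm⟩ : ↥S)
        rw [this]; convert hq1 ⟨m, hm⟩
      have hc2 : (q2.support.map Subtype.val).count m = 0 :=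
        List.count_eq_zero.2 (fun hmem => by
          obtain ⟨b, _, hbe⟩ := List.mem_map.1 hmem
          exact hdisj m hm (hbe ▸ b.property))
      omega
    · have hc1 : (q1.support.map Subtype.val).count m = 0 :=
        List.count_eq_zero.2 (fun hmem => by
          obtain ⟨b, _, hbe⟩ := List.mem_map.1 hmem
          exact hdisj m (hbe ▸ b.property) hm)
      have hc2 : (q2.support.map Subtype.val).count m = 1 := by
        have := List.count_map_of_injective q2.support Subtype.val
          Subtype.val_injective (⟨m, hm⟩ : ↥S')
        rw [this]; convert hq2 ⟨m, hm⟩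
      omega

end SimpleGraph

end AuxForStmt1

theorem stmt_1 {V : Type*} [Fintype V] [DecidableEq V] (T : SimpleGraph V)
    (hT : T.IsTree) (h2 : 2 ≤ Fintype.card V) :
    (T.power 3).IsHamiltonConnected := by
  intro u v huv
  exact SimpleGraph.aux_main (Fintype.card V) V T le_rfl hT u v huv
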